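/- Let A : Cube^op → 𝒜 be a cubical object in a pseudo-abelian category, and define d_n := Σ_{i=1}^{n+1} (−1)^i (δ_{i,1}^{n*} − δ_{i,0}^{n*}) : A_{n+1} → A_n. Then d_{n−1} ∘ d_n = 0, so (A_•, d) is a chain complex; moreover A_•^{deg} and A_•^ν are subcomplexes, and the complexes A_•/A_•^{deg} and A_•^ν are isomorphic. -/

import Mathlib

/-!
STATEMENT 3 (Kahn–Miyazaki–Saito–Yamazaki, "Motives with modulus III", Lemma B.3 (2)):
For a cubical object `A` in a pseudo-abelian category, with
`d_n := Σ_{i=1}^{n+1} (−1)^i (δ_{i,1}^{n*} − δ_{i,0}^{n*}) : A_{n+1} → A_n`, one has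
`d ∘ d = 0`, so `(A_•, d)` is a chain complex; moreover `A_•^{deg}` (the images of
`⊕ p_i^*`) and `A_•^ν` (the kernels of `⊕ δ_{i,1}^*`) are subcomplexes, and the
complexes `A_•/A_•^{deg}` and `A_•^ν` are isomorphic (via the canonical comparison
`A^ν_n ↪ A_n ↠ A_n/A^{deg}_n`).
-/

open CategoryTheory CategoryTheory.Limits

universe v u

/-- A cubical object in `𝒜` (contravariant functor on the cube category `Cube`,
presented by its values on generators and the cubical identities); see Statement 2. -/
structure CubicalObject (𝒜 : Type u) [Category.{v} 𝒜] where
  X : ℕ → 𝒜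
  σ : ∀ (n : ℕ) (_ : ℕ), X n ⟶ X (n + 1)
  δ : ∀ (n : ℕ) (_ : ℕ) (_ : Bool), X (n + 1) ⟶ X n
  σ_δ : ∀ n i ε, 1 ≤ i → i ≤ n + 1 → σ n i ≫ δ n i ε = 𝟙 (X n)
  σ_σ : ∀ n i j, 1 ≤ i → i < j → j ≤ n + 2 →
    σ n i ≫ σ (n + 1) j = σ n (j - 1) ≫ σ (n + 1) i
  δ_δ : ∀ n i j ε ε', 1 ≤ i → i < j → j ≤ n + 2 →
    δ (n + 1) j ε' ≫ δ n i ε = δ (n + 1) i ε ≫ δ n (j - 1) ε'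
  σ_δ_lt : ∀ n i j ε, 1 ≤ i → i < j → j ≤ n + 2 →
    σ (n + 1) j ≫ δ (n + 1) i ε = δ n i ε ≫ σ n (j - 1)
  σ_δ_gt : ∀ n i j ε, 1 ≤ j → j < i → i ≤ n + 2 →
    σ (n + 1) j ≫ δ (n + 1) i ε = δ n (i - 1) ε ≫ σ n j

variable {𝒜 : Type u} [Category.{v} 𝒜] [Preadditive 𝒜] [HasFiniteBiproducts 𝒜]

/-- The differential `d_n = Σ_{i=1}^{n+1} (−1)^i (δ_{i,1}^{n*} − δ_{i,0}^{n*}) :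
A_{n+1} ⟶ A_n`. -/
noncomputable def cubeD (A : CubicalObject 𝒜) (n : ℕ) : A.X (n + 1) ⟶ A.X n :=
  ∑ i ∈ Finset.range (n + 1),
    ((-1 : ℤ) ^ (i + 1)) • (A.δ n (i + 1) true - A.δ n (i + 1) false)

/-- `⊕ p_i^{(n+1)*} : ⊕_{i=1}^{n+1} A_n ⟶ A_{n+1}`, whose image is `A_{n+1}^{deg}`. -/
noncomputable def cubeDeg (A : CubicalObject 𝒜) (n : ℕ) :
    (⨁ fun _ : Fin (n + 1) => A.X n) ⟶ A.X (n + 1) :=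
  biproduct.desc fun i => A.σ n (i.val + 1)

/-- `⊕ δ_{i,1}^{n*} : A_{n+1} ⟶ ⊕_{i=1}^{n+1} A_n`, whose kernel is `A_{n+1}^ν`. -/
noncomputable def cubeNu (A : CubicalObject 𝒜) (n : ℕ) :
    A.X (n + 1) ⟶ ⨁ fun _ : Fin (n + 1) => A.X n :=
  biproduct.lift fun i => A.δ n (i + 1) true

/-!
The terms of `d ∘ d` cancel in pairs by the cubical identity `δ_{a+1} δ_b = δ_b δ_a` (`b ≤ a`).
Everything else is governed by the idempotent `P = e_1 ⋯ e_{n+1}` on `A_{n+1}`, where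
`e_j = 1 − δ_{j,1}^* p_j^*`: it is killed by every `δ_{i,1}^*`, kills every `p_i^*`, is the identity
on `A^ν`, and `1 − P` factors through `⊕ p_i^*`. So `P` lifts to `A^ν` and descends to an inverse of
`A^ν → A/A^{deg}`. Splitting the idempotent `1 − P` shows that the inclusion of the image of
`⊕ p_i^*` factors through `⊕ p_i^*` itself; as `p_j^* d` is a combination of maps ending in some
`p_i^*`, the image is stable under `d`.
-/

section IdempotentComplete

variable {C : Type*} [Category C] [IsIdempotentComplete C]

theorem image_ι_comp_eq_of_comp_comp_eq {B X : C} {f : B ⟶ X} [HasImage f] {t : X ⟶ B}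
    (h : f ≫ t ≫ f = f) : image.ι f ≫ t ≫ f = image.ι f := by
  obtain ⟨Y, i, e, hie, hei⟩ :=
    IsIdempotentComplete.idempotents_split X (t ≫ f) (by rw [Category.assoc, h])
  have : IsSplitMono i := IsSplitMono.mk' ⟨e, hie⟩
  let F : MonoFactorisation f :=
    { I := Y, m := i, e := f ≫ e, fac := by rw [Category.assoc, hei, h] }
  rw [← image.lift_fac F, Category.assoc, ← hei, reassoc_of% hie]

end IdempotentComplete

section Preadditive

variable {C : Type*} [Category C] [Preadditive C]

theorem isIso_kernel_ι_comp_cokernel_π {B X Z : C} {f : B ⟶ X} {g : X ⟶ Z} [HasKernel g]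
    [HasCokernel f] (P : X ⟶ X) (t : X ⟶ B) (hPg : P ≫ g = 0) (hfP : f ≫ P = 0)
    (hιP : kernel.ι g ≫ P = kernel.ι g) (ht : 𝟙 X - P = t ≫ f) :
    IsIso (kernel.ι g ≫ cokernel.π f) := by
  have hf : f ≫ kernel.lift g P hPg = 0 := by
    rw [← cancel_mono (kernel.ι g), Category.assoc, kernel.lift_ι, hfP, zero_comp]
  refine ⟨⟨cokernel.desc f (kernel.lift g P hPg) hf, ?_, ?_⟩⟩
  · rw [← cancel_mono (kernel.ι g)]
    simp only [Category.assoc, cokernel.π_desc, kernel.lift_ι, hιP, Category.id_comp]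
  · have hP : P = 𝟙 X - t ≫ f := by rw [← ht, sub_sub_cancel]
    rw [← cancel_epi (cokernel.π f), cokernel.π_desc_assoc, kernel.lift_ι_assoc, hP,
      Preadditive.sub_comp, Category.assoc, cokernel.condition, comp_zero, sub_zero,
      Category.id_comp, Category.comp_id]

end Preadditive

namespace CubicalObject

variable {C : Type*} [Category C] (A : CubicalObject C)

theorem δ_comp_δ_of_le {n a b : ℕ} (ε ε' : Bool) (hb : 1 ≤ b) (hba : b ≤ a) (ha : a ≤ n + 1) :
    A.δ (n + 1) (a + 1) ε' ≫ A.δ n b ε = A.δ (n + 1) b ε ≫ A.δ n a ε' := by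
  simpa using A.δ_δ n b (a + 1) ε ε' hb (by omega) (by omega)

variable [Preadditive C]

def faceDiff (n i : ℕ) : A.X (n + 1) ⟶ A.X n :=
  A.δ n i true - A.δ n i false

theorem faceDiff_comp_faceDiff {n a b : ℕ} (hb : 1 ≤ b) (hba : b ≤ a) (ha : a ≤ n + 1) :
    A.faceDiff (n + 1) (a + 1) ≫ A.faceDiff n b = A.faceDiff (n + 1) b ≫ A.faceDiff n a := by
  simp only [faceDiff, Preadditive.sub_comp, Preadditive.comp_sub,
    A.δ_comp_δ_of_le _ _ hb hba ha]
  abel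

theorem σ_comp_faceDiff_self {n j : ℕ} (hj : 1 ≤ j) (hjn : j ≤ n + 1) :
    A.σ n j ≫ A.faceDiff n j = 0 := by
  rw [faceDiff, Preadditive.comp_sub, A.σ_δ n j true hj hjn, A.σ_δ n j false hj hjn, sub_self]

theorem σ_comp_faceDiff_of_lt {n b j : ℕ} (hb : 1 ≤ b) (hbj : b < j) (hj : j ≤ n + 2) :
    A.σ (n + 1) j ≫ A.faceDiff (n + 1) b = A.faceDiff n b ≫ A.σ n (j - 1) := by
  rw [faceDiff, faceDiff, Preadditive.comp_sub, Preadditive.sub_comp,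
    A.σ_δ_lt n b j true hb hbj hj, A.σ_δ_lt n b j false hb hbj hj]

theorem σ_comp_faceDiff_of_gt {n b j : ℕ} (hj : 1 ≤ j) (hjb : j < b) (hb : b ≤ n + 2) :
    A.σ (n + 1) j ≫ A.faceDiff (n + 1) b = A.faceDiff n (b - 1) ≫ A.σ n j := by
  rw [faceDiff, faceDiff, Preadditive.comp_sub, Preadditive.sub_comp,
    A.σ_δ_gt n b j true hj hjb hb, A.σ_δ_gt n b j false hj hjb hb]

def normFactor (n j : ℕ) : A.X (n + 1) ⟶ A.X (n + 1) :=
  𝟙 _ - A.δ n j true ≫ A.σ n j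

/-- `e_1 ⋯ e_k` with `e_j = normFactor n j`; for `k = n + 1` this is the projector `P`. -/
def normProj (n : ℕ) : ℕ → (A.X (n + 1) ⟶ A.X (n + 1))
  | 0 => 𝟙 _
  | k + 1 => normProj n k ≫ A.normFactor n (k + 1)

theorem normFactor_comp_δ_self {n j : ℕ} (hj : 1 ≤ j) (hjn : j ≤ n + 1) :
    A.normFactor n j ≫ A.δ n j true = 0 := by
  rw [normFactor, Preadditive.sub_comp, Category.assoc, A.σ_δ n j true hj hjn,
    Category.id_comp, Category.comp_id, sub_self]

theorem σ_comp_normFactor_self {n j : ℕ} (hj : 1 ≤ j) (hjn : j ≤ n + 1) :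
    A.σ n j ≫ A.normFactor n j = 0 := by
  rw [normFactor, Preadditive.comp_sub, ← Category.assoc, A.σ_δ n j true hj hjn,
    Category.id_comp, Category.comp_id, sub_self]

theorem normFactor_comp_δ_of_le {n i j : ℕ} (hi : 1 ≤ i) (hij : i ≤ j) (hj : j ≤ n + 1) :
    A.normFactor (n + 1) (j + 1) ≫ A.δ (n + 1) i true =
      A.δ (n + 1) i true ≫ A.normFactor n j := by
  have hσδ := A.σ_δ_lt n i (j + 1) true hi (by omega) (by omega)
  rw [Nat.add_sub_cancel] at hσδ
  simp only [normFactor, Preadditive.sub_comp, Preadditive.comp_sub, Category.id_comp,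
    Category.comp_id, Category.assoc, hσδ, reassoc_of% A.δ_comp_δ_of_le true true hi hij hj]

theorem σ_comp_normFactor_of_lt {n i j : ℕ} (hj : 1 ≤ j) (hji : j < i) (hi : i ≤ n + 2) :
    A.σ (n + 1) i ≫ A.normFactor (n + 1) j = A.normFactor n j ≫ A.σ (n + 1) i := by
  simp only [normFactor, Preadditive.sub_comp, Preadditive.comp_sub, Category.id_comp,
    Category.comp_id, Category.assoc, reassoc_of% A.σ_δ_lt n j i true hj hji hi,
    A.σ_σ n j i hj hji hi]

theorem normProj_comp_δ {n i k : ℕ} (hi : 1 ≤ i) (hik : i ≤ k) (hk : k ≤ n + 1) :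
    A.normProj n k ≫ A.δ n i true = 0 := by
  induction k with
  | zero => omega
  | succ k ih =>
    rw [normProj, Category.assoc]
    rcases Nat.lt_or_ge k i with hki | hki
    · obtain rfl : i = k + 1 := by omega
      rw [A.normFactor_comp_δ_self hi hk, comp_zero]
    · obtain ⟨m, rfl⟩ : ∃ m, n = m + 1 := ⟨n - 1, by omega⟩
      rw [A.normFactor_comp_δ_of_le hi hki (by omega), reassoc_of% ih hki (by omega), zero_comp]

theorem σ_comp_normProj_of_lt {n i k : ℕ} (hki : k < i) (hi : i ≤ n + 2) :
    A.σ (n + 1) i ≫ A.normProj (n + 1) k = A.normProj n k ≫ A.σ (n + 1) i := by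
  induction k with
  | zero => simp only [normProj, Category.id_comp, Category.comp_id]
  | succ k ih =>
    rw [normProj, normProj, reassoc_of% ih (by omega), Category.assoc,
      A.σ_comp_normFactor_of_lt (by omega) hki hi]

theorem σ_comp_normProj {n i k : ℕ} (hi : 1 ≤ i) (hik : i ≤ k) (hk : k ≤ n + 1) :
    A.σ n i ≫ A.normProj n k = 0 := by
  induction k with
  | zero => omega
  | succ k ih =>
    rw [normProj]
    rcases Nat.lt_or_ge k i with hki | hki
    · obtain rfl : i = k + 1 := by omega
      cases n with
      | zero =>
        obtain rfl : k = 0 := by omega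
        rw [normProj, Category.id_comp, A.σ_comp_normFactor_self hi hk]
      | succ m =>
        rw [reassoc_of% A.σ_comp_normProj_of_lt (Nat.lt_succ_self k) hk,
          A.σ_comp_normFactor_self hi hk, comp_zero]
    · rw [reassoc_of% ih hki (by omega), zero_comp]

theorem comp_normProj_of_comp_δ {W : C} {n k : ℕ} {f : W ⟶ A.X (n + 1)}
    (hf : ∀ j, 1 ≤ j → j ≤ k → f ≫ A.δ n j true = 0) : f ≫ A.normProj n k = f := by
  induction k with
  | zero => exact Category.comp_id f
  | succ k ih =>
    rw [normProj, ← Category.assoc, ih fun j hj hjk => hf j hj (by omega), normFactor,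
      Preadditive.comp_sub, Category.comp_id, reassoc_of% hf (k + 1) (by omega) le_rfl,
      zero_comp, sub_zero]

theorem cubeD_eq (n : ℕ) :
    cubeD A n = ∑ i ∈ Finset.range (n + 1), ((-1 : ℤ) ^ (i + 1)) • A.faceDiff n (i + 1) :=
  rfl

theorem cubeD_comp_cubeD (n : ℕ) : cubeD A (n + 1) ≫ cubeD A n = 0 := by
  let T : ℕ × ℕ → (A.X (n + 2) ⟶ A.X n) := fun p =>
    ((-1 : ℤ) ^ (p.1 + p.2)) • (A.faceDiff (n + 1) (p.1 + 1) ≫ A.faceDiff n (p.2 + 1))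
  have hexpand : cubeD A (n + 1) ≫ cubeD A n =
      ∑ p ∈ Finset.range (n + 2) ×ˢ Finset.range (n + 1), T p := by
    rw [Finset.sum_product, cubeD_eq, cubeD_eq, Preadditive.sum_comp]
    refine Finset.sum_congr rfl fun i _ => ?_
    rw [Preadditive.comp_sum]
    refine Finset.sum_congr rfl fun j _ => ?_
    rw [Preadditive.zsmul_comp, Preadditive.comp_zsmul, smul_smul, ← pow_add,
      show i + 1 + (j + 1) = i + j + 2 by omega, pow_add, neg_one_sq, mul_one]
  have hcancel : ∀ j k, j ≤ k → k ≤ n → T (k + 1, j) + T (j, k) = 0 := by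
    intro j k hjk hk
    simp only [T, A.faceDiff_comp_faceDiff (n := n) (a := k + 1) (b := j + 1) (by omega)
      (by omega) (by omega), show k + 1 + j = (j + k) + 1 by omega, pow_succ, mul_neg_one,
      neg_smul, neg_add_cancel]
  rw [hexpand]
  refine Finset.sum_involution
    (fun p _ => if p.2 < p.1 then (p.2, p.1 - 1) else (p.2 + 1, p.1)) ?_ ?_ ?_ ?_
  · rintro ⟨i, j⟩ hp
    simp only [Finset.mem_product, Finset.mem_range] at hp
    by_cases h : j < i
    · obtain ⟨k, rfl⟩ : ∃ k, i = k + 1 := ⟨i - 1, by omega⟩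
      simpa [h] using hcancel j k (by omega) (by omega)
    · simpa [h, add_comm] using hcancel i j (by omega) (by omega)
  · rintro ⟨i, j⟩ _ _
    by_cases h : j < i <;> simp [h, Prod.ext_iff] <;> omega
  · rintro ⟨i, j⟩ hp
    simp only [Finset.mem_product, Finset.mem_range] at hp ⊢
    by_cases h : j < i <;> simp [h] <;> omega
  · rintro ⟨i, j⟩ _
    by_cases h : j < i
    · simp [h, show ¬ i - 1 < j by omega, Nat.sub_add_cancel (show 1 ≤ i by omega)]
    · simp [h, show i < j + 1 by omega]

variable [HasFiniteBiproducts C]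

noncomputable def factorsThroughDeg (W : C) (n : ℕ) : AddSubgroup (W ⟶ A.X (n + 1)) :=
  (Preadditive.rightComp W (cubeDeg A n)).range

theorem mem_factorsThroughDeg {W : C} {n : ℕ} {x : W ⟶ A.X (n + 1)} :
    x ∈ A.factorsThroughDeg W n ↔ ∃ g, g ≫ cubeDeg A n = x :=
  AddMonoidHom.mem_range

theorem comp_mem_factorsThroughDeg {W W' : C} {n : ℕ} (f : W' ⟶ W) {x : W ⟶ A.X (n + 1)}
    (hx : x ∈ A.factorsThroughDeg W n) : f ≫ x ∈ A.factorsThroughDeg W' n := by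
  obtain ⟨g, rfl⟩ := A.mem_factorsThroughDeg.1 hx
  exact A.mem_factorsThroughDeg.2 ⟨f ≫ g, Category.assoc _ _ _⟩

theorem σ_mem_factorsThroughDeg {n j : ℕ} (hj : 1 ≤ j) (hjn : j ≤ n + 1) :
    A.σ n j ∈ A.factorsThroughDeg (A.X n) n := by
  refine A.mem_factorsThroughDeg.2
    ⟨biproduct.ι (fun _ : Fin (n + 1) => A.X n) ⟨j - 1, by omega⟩, ?_⟩
  simp only [cubeDeg, biproduct.ι_desc, Nat.sub_add_cancel hj]

theorem comp_cubeNu_eq_zero_iff {W : C} {n : ℕ} {f : W ⟶ A.X (n + 1)} :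
    f ≫ cubeNu A n = 0 ↔ ∀ j, 1 ≤ j → j ≤ n + 1 → f ≫ A.δ n j true = 0 := by
  constructor
  · intro hf j hj hjn
    have h := congrArg (· ≫ biproduct.π _ (⟨j - 1, by omega⟩ : Fin (n + 1))) hf
    simp only [cubeNu, Category.assoc, zero_comp] at h
    rwa [biproduct.lift_π, Nat.sub_add_cancel hj] at h
  · intro hf
    refine biproduct.hom_ext _ _ fun j => ?_
    simpa [cubeNu] using hf (j + 1) (by omega) (by omega)

theorem cubeDeg_comp_eq_zero {Z : C} {n : ℕ} {f : A.X (n + 1) ⟶ Z}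
    (hf : ∀ j, 1 ≤ j → j ≤ n + 1 → A.σ n j ≫ f = 0) : cubeDeg A n ≫ f = 0 :=
  biproduct.hom_ext' _ _ fun j => by simpa [cubeDeg] using hf (j + 1) (by omega) (by omega)

theorem one_sub_normProj_mem_factorsThroughDeg {n k : ℕ} (hk : k ≤ n + 1) :
    𝟙 _ - A.normProj n k ∈ A.factorsThroughDeg (A.X (n + 1)) n := by
  induction k with
  | zero => simp only [normProj, sub_self, zero_mem]
  | succ k ih =>
    have hstep : 𝟙 _ - A.normProj n (k + 1) =
        (𝟙 _ - A.normProj n k) + (A.normProj n k ≫ A.δ n (k + 1) true) ≫ A.σ n (k + 1) := by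
      rw [normProj, normFactor, Preadditive.comp_sub, Category.comp_id, Category.assoc]
      abel
    rw [hstep]
    exact add_mem (ih (by omega))
      (A.comp_mem_factorsThroughDeg _ (A.σ_mem_factorsThroughDeg (by omega) hk))

theorem σ_comp_faceDiff_mem_factorsThroughDeg {n j b : ℕ} (hj : 1 ≤ j) (hjn : j ≤ n + 2)
    (hb : 1 ≤ b) (hbn : b ≤ n + 2) :
    A.σ (n + 1) j ≫ A.faceDiff (n + 1) b ∈ A.factorsThroughDeg (A.X (n + 1)) n := by
  rcases lt_trichotomy b j with hbj | rfl | hjb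
  · rw [A.σ_comp_faceDiff_of_lt hb hbj hjn]
    exact A.comp_mem_factorsThroughDeg _ (A.σ_mem_factorsThroughDeg (by omega) (by omega))
  · rw [A.σ_comp_faceDiff_self hj hjn]
    exact zero_mem _
  · rw [A.σ_comp_faceDiff_of_gt hj hjb hbn]
    exact A.comp_mem_factorsThroughDeg _ (A.σ_mem_factorsThroughDeg hj (by omega))

theorem exists_cubeDeg_comp_cubeD_eq (n : ℕ) :
    ∃ g, cubeDeg A (n + 1) ≫ cubeD A (n + 1) = g ≫ cubeDeg A n := by
  have hσ (j : Fin (n + 2)) :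
      A.σ (n + 1) (j + 1) ≫ cubeD A (n + 1) ∈ A.factorsThroughDeg (A.X (n + 1)) n := by
    rw [cubeD_eq, Preadditive.comp_sum]
    refine sum_mem fun i hi => ?_
    rw [Preadditive.comp_zsmul]
    exact zsmul_mem (A.σ_comp_faceDiff_mem_factorsThroughDeg (by omega) (by omega) (by omega)
      (by simp only [Finset.mem_range] at hi; omega)) _
  choose g hg using fun j => A.mem_factorsThroughDeg.1 (hσ j)
  refine ⟨biproduct.desc g, biproduct.hom_ext' _ _ fun j => ?_⟩
  rw [biproduct.ι_desc_assoc, hg]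
  simp only [cubeDeg, biproduct.ι_desc_assoc]

theorem comp_cubeD_comp_cubeNu_eq_zero {W : C} {n : ℕ} {f : W ⟶ A.X (n + 2)}
    (hf : f ≫ cubeNu A (n + 1) = 0) : (f ≫ cubeD A (n + 1)) ≫ cubeNu A n = 0 := by
  rw [comp_cubeNu_eq_zero_iff] at hf ⊢
  intro k hk hkn
  -- a cubical identity turns `δ_{a,ε} ≫ δ_{k,1}` into `δ_{k',1} ≫ _`, and `f ≫ δ_{k',1} = 0`
  have hface (a : ℕ) (ε : Bool) (ha : 1 ≤ a) (han : a ≤ n + 2) :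
      f ≫ A.δ (n + 1) a ε ≫ A.δ n k true = 0 := by
    rcases lt_or_ge k a with hka | hak
    · rw [A.δ_δ n k a true ε hk hka han, reassoc_of% hf k hk (by omega), zero_comp]
    · rw [← A.δ_comp_δ_of_le ε true ha hak hkn, reassoc_of% hf (k + 1) (by omega) (by omega),
        zero_comp]
  rw [cubeD_eq, Preadditive.comp_sum, Preadditive.sum_comp]
  refine Finset.sum_eq_zero fun i hi => ?_
  simp only [Finset.mem_range] at hi
  simp only [faceDiff, Preadditive.zsmul_comp, Preadditive.comp_zsmul, Preadditive.sub_comp,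
    Preadditive.comp_sub, Category.assoc, hface (i + 1) true (by omega) (by omega),
    hface (i + 1) false (by omega) (by omega), sub_self, smul_zero]

theorem normProj_comp_cubeNu (n : ℕ) : A.normProj n (n + 1) ≫ cubeNu A n = 0 :=
  A.comp_cubeNu_eq_zero_iff.2 fun _ hj hjn => A.normProj_comp_δ hj hjn le_rfl

theorem cubeDeg_comp_normProj (n : ℕ) : cubeDeg A n ≫ A.normProj n (n + 1) = 0 :=
  A.cubeDeg_comp_eq_zero fun _ hj hjn => A.σ_comp_normProj hj hjn le_rfl

theorem exists_comp_cubeDeg_eq_image_ι [IsIdempotentComplete C] (n : ℕ)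
    [HasImage (cubeDeg A n)] : ∃ s, s ≫ cubeDeg A n = image.ι (cubeDeg A n) := by
  obtain ⟨t, ht⟩ := A.mem_factorsThroughDeg.1 (A.one_sub_normProj_mem_factorsThroughDeg le_rfl)
  have hdeg : cubeDeg A n ≫ t ≫ cubeDeg A n = cubeDeg A n := by
    rw [ht, Preadditive.comp_sub, A.cubeDeg_comp_normProj, Category.comp_id, sub_zero]
  exact ⟨image.ι _ ≫ t, by rw [Category.assoc, image_ι_comp_eq_of_comp_comp_eq hdeg]⟩

theorem isIso_kernel_ι_cubeNu_comp_cokernel_π_cubeDeg (n : ℕ) [HasKernel (cubeNu A n)]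
    [HasCokernel (cubeDeg A n)] : IsIso (kernel.ι (cubeNu A n) ≫ cokernel.π (cubeDeg A n)) := by
  obtain ⟨t, ht⟩ := A.mem_factorsThroughDeg.1 (A.one_sub_normProj_mem_factorsThroughDeg le_rfl)
  exact isIso_kernel_ι_comp_cokernel_π _ t (A.normProj_comp_cubeNu n) (A.cubeDeg_comp_normProj n)
    (A.comp_normProj_of_comp_δ fun j hj hjn =>
      A.comp_cubeNu_eq_zero_iff.1 (kernel.condition _) j hj hjn) ht.symm

end CubicalObject

theorem cubical_complex_and_normalized
    [IsIdempotentComplete 𝒜] (A : CubicalObject 𝒜)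
    [∀ n, HasKernel (cubeNu A n)] [∀ n, HasImage (cubeDeg A n)]
    [∀ n, HasCokernel (cubeDeg A n)] :
    -- `(A_•, d)` is a chain complex
    (∀ n, cubeD A (n + 1) ≫ cubeD A n = 0) ∧
    -- `A_•^ν` is a subcomplex: the differential restricts along the kernel inclusions
    (∃ dν : ∀ n, (kernel (cubeNu A (n + 1)) ⟶ kernel (cubeNu A n)),
      ∀ n, kernel.ι (cubeNu A (n + 1)) ≫ cubeD A (n + 1) =
        dν n ≫ kernel.ι (cubeNu A n)) ∧
    -- `A_•^{deg}` is a subcomplex: the differential restricts along the image inclusions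
    (∃ ddeg : ∀ n, (image (cubeDeg A (n + 1)) ⟶ image (cubeDeg A n)),
      ∀ n, image.ι (cubeDeg A (n + 1)) ≫ cubeD A (n + 1) =
        ddeg n ≫ image.ι (cubeDeg A n)) ∧
    -- the canonical comparison `A^ν_n → A_n → A_n/A^{deg}_n` is an isomorphism,
    -- i.e. the complexes `A_•/A_•^{deg}` and `A_•^ν` are isomorphic
    (∀ n, IsIso (kernel.ι (cubeNu A n) ≫ cokernel.π (cubeDeg A n))) := by
  refine ⟨A.cubeD_comp_cubeD, ?_, ?_,
    fun n => A.isIso_kernel_ι_cubeNu_comp_cokernel_π_cubeDeg n⟩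
  · exact ⟨fun n => kernel.lift _ _ (A.comp_cubeD_comp_cubeNu_eq_zero (kernel.condition _)),
      fun n => (kernel.lift_ι _ _ _).symm⟩
  · choose s hs using A.exists_comp_cubeDeg_eq_image_ι
    choose g hg using A.exists_cubeDeg_comp_cubeD_eq
    refine ⟨fun n => s (n + 1) ≫ g n ≫ factorThruImage (cubeDeg A n), fun n => ?_⟩
    rw [← hs, Category.assoc, hg, Category.assoc, Category.assoc, image.fac]
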